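/- For every PEG G, parsing expression p, subject xy, and result X (either fail or a pair (y, x')): if G[p] xy ⇝ X in the original PEG semantics, then G[p] xy ∅ ⇝ X in the left-recursive extended semantics with the empty memoization table ∅. -/

import Mathlib

/-- Parsing expressions over non-terminals `N` and terminals `T`. -/
inductive PExp (N T : Type) : Type where
  | empty : PExp N T
  | term : T → PExp N T
  | var : N → PExp N T
  | seq : PExp N T → PExp N T → PExp N T
  | choice : PExp N T → PExp N T → PExp N T
  | star : PExp N T → PExp N T
  | nott : PExp N T → PExp N T

/-- A PEG: a rule for every non-terminal and a starting expression.
(A PEG whose `prod` is a total function is a closed PEG.) -/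
structure PEG (N T : Type) where
  prod : N → PExp N T
  start : PExp N T

/-- Symbols of parse strings: terminals and tagged brackets `A[...]`. -/
inductive PSym (N T : Type) : Type where
  | t : T → PSym N T
  | node : N → List (PSym N T) → PSym N T

/-- Parse strings. -/
abbrev PStr (N T : Type) := List (PSym N T)

/-- Result of a match: `fail`, or a pair (remaining suffix, parse string). -/
inductive Res (N T : Type) : Type where
  | fail : Res N T
  | ok : List T → PStr N T → Res N T
/-- The original PEG semantics `G[p] s ⇝ r`. -/
inductive Match {N T : Type} (G : PEG N T) : PExp N T → List T → Res N T → Prop where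
  | empty1 : Match G .empty s (.ok s [])
  | char1 : Match G (.term a) (a :: s) (.ok s [.t a])
  | char2 : b ≠ a → Match G (.term b) (a :: s) .fail
  | char3 : Match G (.term a) [] .fail
  | var1 : Match G (G.prod A) s (.ok s1 t) → Match G (.var A) s (.ok s1 [.node A t])
  | var2 : Match G (G.prod A) s .fail → Match G (.var A) s .fail
  | con1 : Match G p1 s (.ok s1 t1) → Match G p2 s1 (.ok s2 t2) →
      Match G (.seq p1 p2) s (.ok s2 (t1 ++ t2))
  | con2 : Match G p1 s (.ok s1 t1) → Match G p2 s1 .fail → Match G (.seq p1 p2) s .fail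
  | con3 : Match G p1 s .fail → Match G (.seq p1 p2) s .fail
  | ord1 : Match G p1 s (.ok s1 t1) → Match G (.choice p1 p2) s (.ok s1 t1)
  | ord2 : Match G p1 s .fail → Match G p2 s .fail → Match G (.choice p1 p2) s .fail
  | ord3 : Match G p1 s .fail → Match G p2 s (.ok s1 t1) → Match G (.choice p1 p2) s (.ok s1 t1)
  | not1 : Match G p s .fail → Match G (.nott p) s (.ok s [])
  | not2 : Match G p s (.ok s1 t1) → Match G (.nott p) s .fail
  | rep1 : Match G p s .fail → Match G (.star p) s (.ok s [])
  | rep2 : Match G p s (.ok s1 t1) → Match G (.star p) s1 (.ok s2 t2) →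
      Match G (.star p) s (.ok s2 (t1 ++ t2))
/-- Memoization tables: partial functions from (non-terminal, subject) to results. -/
abbrev Memo (N T : Type) := N → List T → Option (Res N T)

/-- `L[(A,s) ↦ r]`. -/
def Memo.update {N T : Type} [DecidableEq N] [DecidableEq T]
    (L : Memo N T) (A : N) (s : List T) (r : Res N T) : Memo N T :=
  fun B u => if B = A ∧ u = s then some r else L B u

/-- The empty memoization table. -/
def Memo.empty {N T : Type} : Memo N T := fun _ _ => none
mutual
/-- The left-recursive extended semantics `G[p] s L ⇝ r`. -/
inductive LMatch {N T : Type} [DecidableEq N] [DecidableEq T] (G : PEG N T) :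
    PExp N T → List T → Memo N T → Res N T → Prop where
  | empty1 : LMatch G .empty s L (.ok s [])
  | char1 : LMatch G (.term a) (a :: s) L (.ok s [.t a])
  | char2 : b ≠ a → LMatch G (.term b) (a :: s) L .fail
  | char3 : LMatch G (.term a) [] L .fail
  | lvar1 : L A s = none →
      LMatch G (G.prod A) s (Memo.update L A s .fail) (.ok s1 t1) →
      Inc G A s (Memo.update L A s (.ok s1 t1)) (.ok s2 t2) →
      LMatch G (.var A) s L (.ok s2 [.node A t2])
  | lvar2 : L A s = none →
      LMatch G (G.prod A) s (Memo.update L A s .fail) .fail →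
      LMatch G (.var A) s L .fail
  | lvar3 : L A s = some .fail → LMatch G (.var A) s L .fail
  | lvar4 : L A s = some (.ok y t) → LMatch G (.var A) s L (.ok y [.node A t])
  | con1 : LMatch G p1 s L (.ok s1 t1) → LMatch G p2 s1 L (.ok s2 t2) →
      LMatch G (.seq p1 p2) s L (.ok s2 (t1 ++ t2))
  | con2 : LMatch G p1 s L (.ok s1 t1) → LMatch G p2 s1 L .fail →
      LMatch G (.seq p1 p2) s L .fail
  | con3 : LMatch G p1 s L .fail → LMatch G (.seq p1 p2) s L .fail
  | ord1 : LMatch G p1 s L (.ok s1 t1) → LMatch G (.choice p1 p2) s L (.ok s1 t1)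
  | ord2 : LMatch G p1 s L .fail → LMatch G p2 s L .fail →
      LMatch G (.choice p1 p2) s L .fail
  | ord3 : LMatch G p1 s L .fail → LMatch G p2 s L (.ok s1 t1) →
      LMatch G (.choice p1 p2) s L (.ok s1 t1)
  | not1 : LMatch G p s L .fail → LMatch G (.nott p) s L (.ok s [])
  | not2 : LMatch G p s L (.ok s1 t1) → LMatch G (.nott p) s L .fail
  | rep1 : LMatch G p s L .fail → LMatch G (.star p) s L (.ok s [])
  | rep2 : LMatch G p s L (.ok s1 t1) → LMatch G (.star p) s1 L (.ok s2 t2) →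
      LMatch G (.star p) s L (.ok s2 (t1 ++ t2))

/-- The auxiliary bound-increasing relation `G[P(A)] s L ⇝INC r`. -/
inductive Inc {N T : Type} [DecidableEq N] [DecidableEq T] (G : PEG N T) :
    N → List T → Memo N T → Res N T → Prop where
  | inc1 : y ≠ [] →
      LMatch G (G.prod A) (x ++ y ++ z ++ w)
        (Memo.update L A (x ++ y ++ z ++ w) (.ok (y ++ z ++ w) t1)) (.ok (z ++ w) t2) →
      Inc G A (x ++ y ++ z ++ w)
        (Memo.update L A (x ++ y ++ z ++ w) (.ok (z ++ w) t2)) (.ok w t3) →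
      Inc G A (x ++ y ++ z ++ w)
        (Memo.update L A (x ++ y ++ z ++ w) (.ok (y ++ z ++ w) t1)) (.ok w t3)
  | inc2 : L A s = some r → LMatch G (G.prod A) s L .fail → Inc G A s L r
  | inc3 :
      LMatch G (G.prod A) (x ++ y ++ z)
        (Memo.update L A (x ++ y ++ z) (.ok z t1)) (.ok (y ++ z) t2) →
      Inc G A (x ++ y ++ z)
        (Memo.update L A (x ++ y ++ z) (.ok z t1)) (.ok z t1)
end

/-! Induct on the size of a derivation in the original semantics, keeping the memo table sound
for derivations of that size: its successes are true results and its failures are calls still in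
progress. On a first call of `A` at `s`, the seed `fail` is harmless because a size-minimal
derivation of the body of `A` at `s` never lets `A` succeed at `s` again. Replacing the seed by
the true result, the body reproduces it, so the growing loop stops at once (rule inc.3). -/

variable {N T : Type} {G : PEG N T}

theorem Match.det {p : PExp N T} {s : List T} {X Y : Res N T}
    (hX : Match G p s X) (hY : Match G p s Y) : X = Y := by
  induction hX generalizing Y <;> cases hY <;> grind

theorem Match.suffix {p : PExp N T} {s s' : List T} {t : PStr N T}
    (h : Match G p s (.ok s' t)) : s' <:+ s := by
  generalize hX : Res.ok s' t = X at h
  induction h generalizing s' t <;> grind [List.suffix_refl, List.suffix_cons, List.IsSuffix.trans]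

inductive SizedMatch (G : PEG N T) : ℕ → PExp N T → List T → Res N T → Prop where
  | empty1 : SizedMatch G 0 .empty s (.ok s [])
  | char1 : SizedMatch G 0 (.term a) (a :: s) (.ok s [.t a])
  | char2 : b ≠ a → SizedMatch G 0 (.term b) (a :: s) .fail
  | char3 : SizedMatch G 0 (.term a) [] .fail
  | var1 : SizedMatch G n (G.prod A) s (.ok s1 t) →
      SizedMatch G (n + 1) (.var A) s (.ok s1 [.node A t])
  | var2 : SizedMatch G n (G.prod A) s .fail → SizedMatch G (n + 1) (.var A) s .fail
  | con1 : SizedMatch G n₁ p1 s (.ok s1 t1) → SizedMatch G n₂ p2 s1 (.ok s2 t2) →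
      SizedMatch G (n₁ + n₂ + 1) (.seq p1 p2) s (.ok s2 (t1 ++ t2))
  | con2 : SizedMatch G n₁ p1 s (.ok s1 t1) → SizedMatch G n₂ p2 s1 .fail →
      SizedMatch G (n₁ + n₂ + 1) (.seq p1 p2) s .fail
  | con3 : SizedMatch G n p1 s .fail → SizedMatch G (n + 1) (.seq p1 p2) s .fail
  | ord1 : SizedMatch G n p1 s (.ok s1 t1) → SizedMatch G (n + 1) (.choice p1 p2) s (.ok s1 t1)
  | ord2 : SizedMatch G n₁ p1 s .fail → SizedMatch G n₂ p2 s .fail →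
      SizedMatch G (n₁ + n₂ + 1) (.choice p1 p2) s .fail
  | ord3 : SizedMatch G n₁ p1 s .fail → SizedMatch G n₂ p2 s (.ok s1 t1) →
      SizedMatch G (n₁ + n₂ + 1) (.choice p1 p2) s (.ok s1 t1)
  | not1 : SizedMatch G n p s .fail → SizedMatch G (n + 1) (.nott p) s (.ok s [])
  | not2 : SizedMatch G n p s (.ok s1 t1) → SizedMatch G (n + 1) (.nott p) s .fail
  | rep1 : SizedMatch G n p s .fail → SizedMatch G (n + 1) (.star p) s (.ok s [])
  | rep2 : SizedMatch G n₁ p s (.ok s1 t1) → SizedMatch G n₂ (.star p) s1 (.ok s2 t2) →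
      SizedMatch G (n₁ + n₂ + 1) (.star p) s (.ok s2 (t1 ++ t2))

theorem SizedMatch.toMatch {n : ℕ} {p : PExp N T} {s : List T} {X : Res N T}
    (h : SizedMatch G n p s X) : Match G p s X := by
  induction h <;> grind [Match]

theorem Match.exists_sizedMatch {p : PExp N T} {s : List T} {X : Res N T}
    (h : Match G p s X) : ∃ n, SizedMatch G n p s X := by
  induction h with
  | empty1 => exact ⟨_, .empty1⟩
  | char1 => exact ⟨_, .char1⟩
  | char2 hba => exact ⟨_, .char2 hba⟩
  | char3 => exact ⟨_, .char3⟩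
  | var1 _ ih => obtain ⟨_, h⟩ := ih; exact ⟨_, .var1 h⟩
  | var2 _ ih => obtain ⟨_, h⟩ := ih; exact ⟨_, .var2 h⟩
  | con1 _ _ ih₁ ih₂ => obtain ⟨_, h₁⟩ := ih₁; obtain ⟨_, h₂⟩ := ih₂; exact ⟨_, .con1 h₁ h₂⟩
  | con2 _ _ ih₁ ih₂ => obtain ⟨_, h₁⟩ := ih₁; obtain ⟨_, h₂⟩ := ih₂; exact ⟨_, .con2 h₁ h₂⟩
  | con3 _ ih => obtain ⟨_, h⟩ := ih; exact ⟨_, .con3 h⟩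
  | ord1 _ ih => obtain ⟨_, h⟩ := ih; exact ⟨_, .ord1 h⟩
  | ord2 _ _ ih₁ ih₂ => obtain ⟨_, h₁⟩ := ih₁; obtain ⟨_, h₂⟩ := ih₂; exact ⟨_, .ord2 h₁ h₂⟩
  | ord3 _ _ ih₁ ih₂ => obtain ⟨_, h₁⟩ := ih₁; obtain ⟨_, h₂⟩ := ih₂; exact ⟨_, .ord3 h₁ h₂⟩
  | not1 _ ih => obtain ⟨_, h⟩ := ih; exact ⟨_, .not1 h⟩
  | not2 _ ih => obtain ⟨_, h⟩ := ih; exact ⟨_, .not2 h⟩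
  | rep1 _ ih => obtain ⟨_, h⟩ := ih; exact ⟨_, .rep1 h⟩
  | rep2 _ _ ih₁ ih₂ => obtain ⟨_, h₁⟩ := ih₁; obtain ⟨_, h₂⟩ := ih₂; exact ⟨_, .rep2 h₁ h₂⟩

structure Memo.Sound (G : PEG N T) (n : ℕ) (L : Memo N T) : Prop where
  ok : ∀ {B u y t}, L B u = some (.ok y t) → Match G (G.prod B) u (.ok y t)
  fail : ∀ {B u j y t}, L B u = some .fail → j ≤ n → ¬SizedMatch G j (.var B) u (.ok y t)

theorem Memo.sound_empty (n : ℕ) : Memo.Sound G n Memo.empty :=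
  ⟨(nomatch ·), (nomatch ·)⟩

theorem Memo.Sound.mono {n m : ℕ} {L : Memo N T} (hL : Memo.Sound G n L) (hmn : m ≤ n) :
    Memo.Sound G m L :=
  ⟨hL.ok, fun hB hj => hL.fail hB (hj.trans hmn)⟩

variable [DecidableEq N] [DecidableEq T]

theorem Memo.Sound.update_ok {n : ℕ} {L : Memo N T} {A : N} {s y : List T} {t : PStr N T}
    (hL : Memo.Sound G n L) (hA : Match G (G.prod A) s (.ok y t)) :
    Memo.Sound G n (L.update A s (.ok y t)) := by
  constructor
  · intro B u y' t' h
    simp only [Memo.update] at h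
    split_ifs at h with hBu
    · obtain ⟨rfl, rfl⟩ := hBu
      cases h
      exact hA
    · exact hL.ok h
  · intro B u j y' t' h
    simp only [Memo.update] at h
    split_ifs at h
    · cases h
    · exact hL.fail h

theorem Memo.Sound.update_fail {n : ℕ} {L : Memo N T} {A : N} {s : List T}
    (hL : Memo.Sound G n L) (hA : ∀ {j y t}, j ≤ n → ¬SizedMatch G j (.var A) s (.ok y t)) :
    Memo.Sound G n (L.update A s .fail) := by
  constructor
  · intro B u y t h
    simp only [Memo.update] at h
    split_ifs at h
    · cases h
    · exact hL.ok h
  · intro B u j y t h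
    simp only [Memo.update] at h
    split_ifs at h with hBu
    · obtain ⟨rfl, rfl⟩ := hBu
      exact hA
    · exact hL.fail h

theorem Inc.of_lmatch_self {L : Memo N T} {A : N} {s s' : List T} {t : PStr N T}
    (h : LMatch G (G.prod A) s (L.update A s (.ok s' t)) (.ok s' t)) (hs : s' <:+ s) :
    Inc G A s (L.update A s (.ok s' t)) (.ok s' t) := by
  obtain ⟨x, rfl⟩ := hs
  simpa using Inc.inc3 (x := x) (y := []) (z := s') (t2 := t) (by simpa using h)

theorem lmatch_var_ok {n k : ℕ}
    (ih : ∀ m < n, ∀ {p : PExp N T} {s : List T} {X : Res N T} {L : Memo N T},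
      SizedMatch G m p s X → Memo.Sound G m L → LMatch G p s L X)
    {L : Memo N T} {A : N} {s s' : List T} {t : PStr N T}
    (hA : SizedMatch G k (G.prod A) s (.ok s' t)) (hk : k < n) (hL : Memo.Sound G n L) :
    LMatch G (.var A) s L (.ok s' [.node A t]) := by
  match hLA : L A s with
  | none =>
    classical
    have hex : ∃ m, SizedMatch G m (G.prod A) s (.ok s' t) := ⟨k, hA⟩
    have hmk : Nat.find hex ≤ k := Nat.find_min' hex hA
    have hA_fresh : ∀ {j y t'}, j ≤ Nat.find hex → ¬SizedMatch G j (.var A) s (.ok y t') := by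
      intro j y t' hj h
      cases h with
      | var1 h' =>
        obtain ⟨rfl, rfl⟩ : y = s' ∧ _ = t := by simpa using h'.toMatch.det hA.toMatch
        exact Nat.find_min hex (by omega) h'
    have hL' := hL.mono (m := Nat.find hex) (by omega)
    have hseed := ih _ (by omega) (Nat.find_spec hex) (hL'.update_fail hA_fresh)
    have hgrow := ih _ (by omega) (Nat.find_spec hex) (hL'.update_ok hA.toMatch)
    exact .lvar1 hLA hseed (Inc.of_lmatch_self hgrow hA.toMatch.suffix)
  | some .fail => exact absurd (SizedMatch.var1 hA) (hL.fail hLA hk)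
  | some (.ok y t') =>
    obtain ⟨rfl, rfl⟩ : y = s' ∧ t' = t := by simpa using (hL.ok hLA).det hA.toMatch
    exact .lvar4 hLA

theorem lmatch_var_fail {n k : ℕ}
    (ih : ∀ m < n, ∀ {p : PExp N T} {s : List T} {X : Res N T} {L : Memo N T},
      SizedMatch G m p s X → Memo.Sound G m L → LMatch G p s L X)
    {L : Memo N T} {A : N} {s : List T}
    (hA : SizedMatch G k (G.prod A) s .fail) (hk : k < n) (hL : Memo.Sound G n L) :
    LMatch G (.var A) s L .fail := by
  match hLA : L A s with
  | none =>
    have hA_fails : ∀ {j y t}, j ≤ k → ¬SizedMatch G j (.var A) s (.ok y t) :=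
      fun _ h => nomatch h.toMatch.det (.var2 hA.toMatch)
    exact .lvar2 hLA (ih k hk hA ((hL.mono hk.le).update_fail hA_fails))
  | some .fail => exact .lvar3 hLA
  | some (.ok _ _) => nomatch (hL.ok hLA).det hA.toMatch

theorem SizedMatch.lmatch {n : ℕ} {p : PExp N T} {s : List T} {X : Res N T} {L : Memo N T}
    (h : SizedMatch G n p s X) (hL : Memo.Sound G n L) : LMatch G p s L X := by
  induction n using Nat.strong_induction_on generalizing p s X L with
  | _ n ih =>
  have ih_lt : ∀ {m p s X}, m < n → SizedMatch G m p s X → LMatch G p s L X :=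
    fun hm h => ih _ hm h (hL.mono hm.le)
  cases h with
  | empty1 => exact .empty1
  | char1 => exact .char1
  | char2 hba => exact .char2 hba
  | char3 => exact .char3
  | var1 hA => exact lmatch_var_ok ih hA (by omega) hL
  | var2 hA => exact lmatch_var_fail ih hA (by omega) hL
  | con1 h₁ h₂ => exact .con1 (ih_lt (by omega) h₁) (ih_lt (by omega) h₂)
  | con2 h₁ h₂ => exact .con2 (ih_lt (by omega) h₁) (ih_lt (by omega) h₂)
  | con3 h₁ => exact .con3 (ih_lt (by omega) h₁)
  | ord1 h₁ => exact .ord1 (ih_lt (by omega) h₁)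
  | ord2 h₁ h₂ => exact .ord2 (ih_lt (by omega) h₁) (ih_lt (by omega) h₂)
  | ord3 h₁ h₂ => exact .ord3 (ih_lt (by omega) h₁) (ih_lt (by omega) h₂)
  | not1 h₁ => exact .not1 (ih_lt (by omega) h₁)
  | not2 h₁ => exact .not2 (ih_lt (by omega) h₁)
  | rep1 h₁ => exact .rep1 (ih_lt (by omega) h₁)
  | rep2 h₁ h₂ => exact .rep2 (ih_lt (by omega) h₁) (ih_lt (by omega) h₂)

/-- If `G[p] xy ⇝ X` in the original semantics, then `G[p] xy ∅ ⇝ X` in the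
left-recursive extended semantics with the empty memoization table. -/
theorem lmatch_conservative_empty {N T : Type} [DecidableEq N] [DecidableEq T]
    (G : PEG N T) (p : PExp N T) (s : List T) (X : Res N T)
    (h : Match G p s X) : LMatch G p s Memo.empty X := by
  obtain ⟨n, hn⟩ := h.exists_sizedMatch
  exact hn.lmatch (Memo.sound_empty n)
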